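/- For all integers n, s ≥ 1 and any indeterminate X: the sum over partitions μ of n of (X^{ℓ(μ)-1} / z_μ)(∑_{i=1}^{ℓ(μ)} (μ_i)_s) equals (s-1)! [C(X+n+s-1, n) - C(X+n-1, n)]. -/

import Mathlib

open Finset

/-- Ferrers diagram of a list of row lengths: cells `(i,j)` with `i` a row index
and `j < l[i]`. -/
def diagram (l : List ℕ) : Finset (ℕ × ℕ) :=
  (Finset.range l.length).biUnion fun i => (Finset.range (l.getD i 0)).image fun j => (i, j)

/-- `gbc l r` = `⟨λ, r⟩`: the number of `r`-element subsets of the Ferrers diagram of `l`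
containing at least one cell in every row. -/
def gbc (l : List ℕ) (r : ℕ) : ℕ :=
  (((diagram l).powersetCard r).filter
    (fun S => ∀ i ∈ Finset.range l.length, ∃ c ∈ S, c.1 = i)).card

/-- `⟨λ, r⟩` for integer `r`, zero for negative `r`. -/
def gbcZ (l : List ℕ) (r : ℤ) : ℕ := if 0 ≤ r then gbc l r.toNat else 0

/-- `⟨μ, r⟩` for a partition `μ` of `n`. -/
def gbcP {n : ℕ} (μ : n.Partition) (r : ℕ) : ℕ :=
  gbc (μ.parts.sort (· ≥ ·)) r

/-- `z_μ = ∏_{i ≥ 1} i^{m_i(μ)} m_i(μ)!`. -/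
def zMu {n : ℕ} (μ : n.Partition) : ℕ :=
  ∏ i ∈ μ.parts.toFinset, i ^ μ.parts.count i * (μ.parts.count i).factorial

/-- rising factorial `(a)_s = a(a+1)⋯(a+s-1)`. -/
def asc (a s : ℕ) : ℕ := ∏ t ∈ Finset.range s, (a + t)

/-- polynomial binomial coefficient `C(x, r) = x(x-1)⋯(x-r+1)/r!`. -/
def cb (x : ℚ) (r : ℕ) : ℚ := (∏ t ∈ Finset.range r, (x - t)) / r.factorial

/-- `h_k(1^x) = C(x+k-1, k) = x(x+1)⋯(x+k-1)/k!` as a polynomial in `x`. -/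
def hp (x : ℚ) (k : ℕ) : ℚ := (∏ t ∈ Finset.range k, (x + t)) / k.factorial

/-- integer binomial coefficient with the convention `C(a,b) = 0` unless `0 ≤ b ≤ a`. -/
def bin (a b : ℤ) : ℚ := if 0 ≤ b ∧ b ≤ a then ((a.toNat).choose b.toNat : ℚ) else 0

/-- integer binomial coefficient with the additional convention `C(-1,-1) = 1`. -/
def binC (a b : ℤ) : ℚ := if a = -1 ∧ b = -1 then 1 else bin a b

/-- unsigned Stirling numbers of the first kind:
`x(x+1)⋯(x+n-1) = ∑_k stir n k * x^k`. -/
def stir : ℕ → ℕ → ℕ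
  | 0, 0 => 1
  | 0, _ + 1 => 0
  | _ + 1, 0 => 0
  | n + 1, k + 1 => n * stir n (k + 1) + stir n k

/-! ### Auxiliary development -/

open Multiset in
/-- `z` of a bare multiset of parts. -/
def Zm (m : Multiset ℕ) : ℕ :=
  ∏ i ∈ m.toFinset, i ^ m.count i * (m.count i).factorial

lemma zMu_eq {n : ℕ} (μ : n.Partition) : zMu μ = Zm μ.parts := rfl

lemma Zm_pos {m : Multiset ℕ} (h : ∀ i ∈ m, 0 < i) : 0 < Zm m := by
  apply Finset.prod_pos
  intro i hi
  have hi' : 0 < i := h i (Multiset.mem_toFinset.mp hi)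
  exact Nat.mul_pos (Nat.pow_pos hi') (Nat.factorial_pos _)

lemma Zm_cons {a : ℕ} (_ha : 0 < a) (t : Multiset ℕ) :
    Zm (a ::ₘ t) = a * (t.count a + 1) * Zm t := by
  classical
  set F : Finset ℕ := insert a t.toFinset with hF
  have haF : a ∈ F := Finset.mem_insert_self _ _
  have ht : (∏ i ∈ t.toFinset, i ^ t.count i * (t.count i).factorial)
      = ∏ i ∈ F, i ^ t.count i * (t.count i).factorial := by
    refine Finset.prod_subset (Finset.subset_insert _ _) ?_
    intro x _ hx
    have : t.count x = 0 := by
      rw [Multiset.count_eq_zero]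
      exact fun hxm => hx (Multiset.mem_toFinset.mpr hxm)
    simp [this]
  have hts : (a ::ₘ t).toFinset = F := by simp [hF, Multiset.toFinset_cons]
  rw [Zm, Zm, hts, ht, ← Finset.mul_prod_erase F _ haF, ← Finset.mul_prod_erase F _ haF]
  have hrest : ∏ i ∈ F.erase a, i ^ (a ::ₘ t).count i * ((a ::ₘ t).count i).factorial
      = ∏ i ∈ F.erase a, i ^ t.count i * (t.count i).factorial := by
    refine Finset.prod_congr rfl fun i hi => ?_
    have hne : i ≠ a := Finset.ne_of_mem_erase hi
    rw [Multiset.count_cons_of_ne hne]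
  rw [hrest, Multiset.count_cons_self, pow_succ, Nat.factorial_succ]
  ring

/-- The basic generating sum over partitions. -/
noncomputable def Tp (X : ℚ) (k : ℕ) : ℚ :=
  ∑ ν : k.Partition, X ^ (Multiset.card ν.parts) / (Zm ν.parts : ℚ)

lemma Tp_zero (X : ℚ) : Tp X 0 = 1 := by
  rw [Tp]
  rw [Fintype.sum_unique]
  have : (default : Nat.Partition 0).parts = 0 := by
    have h := (default : Nat.Partition 0).parts_sum
    by_contra hne
    obtain ⟨x, hx⟩ := Multiset.exists_mem_of_ne_zero hne
    have hx0 : 0 < x := (default : Nat.Partition 0).parts_pos hx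
    have hle : x ≤ (default : Nat.Partition 0).parts.sum := Multiset.le_sum_of_mem hx
    omega
  simp [this, Zm]

lemma parts_mem_Icc {k : ℕ} (μ : k.Partition) {a : ℕ} (ha : a ∈ μ.parts) :
    a ∈ Finset.Icc 1 k := by
  have h1 : 0 < a := μ.parts_pos ha
  have h2 : a ≤ μ.parts.sum := Multiset.le_sum_of_mem ha
  rw [μ.parts_sum] at h2
  simp only [Finset.mem_Icc]
  omega

/-- expand a multiset sum of values into a sum over `Icc 1 k` weighted by counts. -/
lemma map_sum_eq {k : ℕ} (μ : k.Partition) (f : ℕ → ℚ) :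
    (μ.parts.map f).sum = ∑ a ∈ Finset.Icc 1 k, (μ.parts.count a : ℚ) * f a := by
  classical
  rw [Finset.sum_multiset_map_count]
  have hsub : (∑ a ∈ μ.parts.toFinset, μ.parts.count a • f a)
      = ∑ a ∈ Finset.Icc 1 k, μ.parts.count a • f a := by
    refine Finset.sum_subset (fun a ha => parts_mem_Icc μ (Multiset.mem_toFinset.mp ha)) ?_
    intro x _ hx
    have : μ.parts.count x = 0 := by
      rw [Multiset.count_eq_zero]
      exact fun hxm => hx (Multiset.mem_toFinset.mpr hxm)
    simp [this]
  rw [hsub]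
  refine Finset.sum_congr rfl fun a _ => ?_
  rw [nsmul_eq_mul]

lemma sum_count_eq {k : ℕ} (μ : k.Partition) :
    ∑ a ∈ Finset.Icc 1 k, (a : ℚ) * (μ.parts.count a : ℚ) = (k : ℚ) := by
  have h := map_sum_eq μ (fun a : ℕ => (a : ℚ))
  have hs : (μ.parts.map (fun a : ℕ => (a : ℚ))).sum = (k : ℚ) := by
    have h2 := map_multiset_sum (Nat.castRingHom ℚ) μ.parts
    simp only [Nat.coe_castRingHom, μ.parts_sum] at h2
    exact h2.symm
  rw [hs] at h
  rw [h]
  exact Finset.sum_congr rfl fun a _ => by ring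

/-- The key removal bijection. -/
lemma key_bij (X : ℚ) (k a : ℕ) (ha : 1 ≤ a) (hak : a ≤ k) :
    ∑ μ : k.Partition, (μ.parts.count a : ℚ) * (X ^ (Multiset.card μ.parts - 1) / (Zm μ.parts : ℚ))
      = (1 / (a : ℚ)) * Tp X (k - a) := by
  classical
  rw [Tp, Finset.mul_sum]
  rw [← Finset.sum_filter_of_ne (p := fun μ : k.Partition => a ∈ μ.parts)
    (fun μ _ h => by
      by_contra hmem
      exact h (by simp [Multiset.count_eq_zero_of_notMem hmem]))]
  refine Finset.sum_bij'
    (i := fun μ hμ => (⟨μ.parts.erase a, ?_, ?_⟩ : (k - a).Partition))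
    (j := fun ν hν => (⟨a ::ₘ ν.parts, ?_, ?_⟩ : k.Partition))
    ?_ ?_ ?_ ?_ ?_
  · intro i hi
    exact μ.parts_pos (Multiset.mem_of_mem_erase hi)
  · have hmem : a ∈ μ.parts := (Finset.mem_filter.mp hμ).2
    have := congrArg Multiset.sum (Multiset.cons_erase hmem)
    rw [Multiset.sum_cons, μ.parts_sum] at this
    omega
  · intro i hi
    rcases Multiset.mem_cons.mp hi with h | h
    · omega
    · exact ν.parts_pos h
  · rw [Multiset.sum_cons, ν.parts_sum]; omega
  · intro μ hμ; exact Finset.mem_univ _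
  · intro ν hν
    refine Finset.mem_filter.mpr ⟨Finset.mem_univ _, ?_⟩
    exact Multiset.mem_cons_self _ _
  · intro μ hμ
    apply Nat.Partition.ext
    exact Multiset.cons_erase (Finset.mem_filter.mp hμ).2
  · intro ν hν
    apply Nat.Partition.ext
    exact Multiset.erase_cons_head _ _
  · intro μ hμ
    have hmem : a ∈ μ.parts := (Finset.mem_filter.mp hμ).2
    set c := μ.parts.count a with hc
    have hc1 : 1 ≤ c := Multiset.one_le_count_iff_mem.mpr hmem
    have hZ : Zm μ.parts = a * c * Zm (μ.parts.erase a) := by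
      conv_lhs => rw [← Multiset.cons_erase hmem]
      rw [Zm_cons (by omega)]
      rw [Multiset.count_erase_self, ← hc]
      congr 2
      omega
    have hcard : Multiset.card μ.parts - 1 = Multiset.card (μ.parts.erase a) := by
      rw [Multiset.card_erase_of_mem hmem]
      rfl
    have hZpos : 0 < Zm (μ.parts.erase a) :=
      Zm_pos fun i hi => μ.parts_pos (Multiset.mem_of_mem_erase hi)
    rw [hZ, hcard]
    have hZne : (Zm (μ.parts.erase a) : ℚ) ≠ 0 := Nat.cast_ne_zero.mpr hZpos.ne'
    have hane : (a : ℚ) ≠ 0 := Nat.cast_ne_zero.mpr (by omega)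
    have hcne : (c : ℚ) ≠ 0 := Nat.cast_ne_zero.mpr (by omega)
    push_cast
    field_simp

/-- `(k+1) ⬝ hp x (k+1) = (x+k) ⬝ hp x k`. -/
lemma hp_succ_mul (x : ℚ) (k : ℕ) :
    ((k : ℚ) + 1) * hp x (k + 1) = (x + k) * hp x k := by
  rw [hp, hp, Finset.prod_range_succ, Nat.factorial_succ]
  have h1 : ((k.factorial : ℚ)) ≠ 0 := Nat.cast_ne_zero.mpr (Nat.factorial_pos _).ne'
  have h2 : ((k : ℚ) + 1) ≠ 0 := by positivity
  push_cast
  field_simp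

lemma prod_shift (z : ℚ) (a : ℕ) :
    z * ∏ t ∈ Finset.range a, (z + 1 + t) = (z + a) * ∏ t ∈ Finset.range a, (z + t) := by
  have h1 := Finset.prod_range_succ (fun t => z + (t : ℚ)) a
  have h2 := Finset.prod_range_succ' (fun t => z + (t : ℚ)) a
  rw [h1] at h2
  simp only [Nat.cast_zero, add_zero, Nat.cast_add, Nat.cast_one] at h2
  have h3 : (∏ t ∈ Finset.range a, (z + 1 + (t : ℚ)))
      = ∏ t ∈ Finset.range a, (z + ((t : ℚ) + 1)) :=
    Finset.prod_congr rfl fun t _ => by ring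
  rw [h3, mul_comm]
  rw [← h2]
  ring

lemma hp_shift (z : ℚ) (a : ℕ) : z * hp (z + 1) a = (z + a) * hp z a := by
  rw [hp, hp, mul_div_assoc', mul_div_assoc', prod_shift]

/-- Pascal's rule for `hp`. -/
lemma hp_pascal (z : ℚ) (k : ℕ) : hp (z + 1) (k + 1) = hp z (k + 1) + hp (z + 1) k := by
  have hfac : ((k + 1).factorial : ℚ) ≠ 0 := Nat.cast_ne_zero.mpr (Nat.factorial_pos _).ne'
  have hkfac : ((k).factorial : ℚ) ≠ 0 := Nat.cast_ne_zero.mpr (Nat.factorial_pos _).ne'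
  rw [hp, hp, hp, Finset.prod_range_succ, Finset.prod_range_succ' (fun t => z + t) k]
  have h3 : (∏ t ∈ Finset.range k, (z + (t + 1 : ℕ))) = ∏ t ∈ Finset.range k, (z + 1 + t) := by
    refine Finset.prod_congr rfl fun t _ => by push_cast; ring
  rw [h3, Nat.factorial_succ]
  push_cast
  field_simp
  ring

lemma hp_zero_right (x : ℚ) : hp x 0 = 1 := by simp [hp]

lemma hp_zero_left (a : ℕ) : hp ((0 : ℕ) : ℚ) (a + 1) = 0 := by
  rw [hp, Finset.prod_range_succ' (fun t => ((0:ℕ):ℚ) + t) a]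
  simp

/-- Chu–Vandermonde for the `hp` polynomials. -/
lemma vdm (s : ℕ) : ∀ (n : ℕ) (x : ℚ),
    ∑ a ∈ Finset.range (n + 1), hp (s : ℚ) a * hp x (n - a) = hp (x + s) n := by
  induction s with
  | zero =>
    intro n x
    rw [Finset.sum_eq_single 0]
    · simp [hp_zero_right]
    · intro a _ hane
      obtain ⟨a', rfl⟩ := Nat.exists_eq_succ_of_ne_zero hane
      rw [hp_zero_left]
      ring
    · intro h; exact absurd (Finset.mem_range.mpr (Nat.succ_pos n)) h
  | succ s ih =>
    intro n
    induction n with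
    | zero => intro x; simp [hp_zero_right]
    | succ n ihn =>
      intro x
      rw [Finset.sum_range_succ' (fun a => hp ((s + 1 : ℕ) : ℚ) a * hp x (n + 1 - a)) (n + 1)]
      simp only [Nat.succ_sub_succ_eq_sub]
      have hpas : ∀ a : ℕ, hp ((s + 1 : ℕ) : ℚ) (a + 1)
          = hp (s : ℚ) (a + 1) + hp ((s + 1 : ℕ) : ℚ) a := by
        intro a
        have := hp_pascal (s : ℚ) a
        push_cast
        push_cast at this
        exact this
      have hsplit : ∑ a ∈ Finset.range (n + 1),
            hp ((s + 1 : ℕ) : ℚ) (a + 1) * hp x (n - a)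
          = (∑ a ∈ Finset.range (n + 1), hp (s : ℚ) (a + 1) * hp x (n - a))
            + ∑ a ∈ Finset.range (n + 1), hp ((s + 1 : ℕ) : ℚ) a * hp x (n - a) := by
        rw [← Finset.sum_add_distrib]
        refine Finset.sum_congr rfl fun a _ => ?_
        rw [hpas a]
        ring
      rw [hsplit, ihn x]
      have houter : (∑ a ∈ Finset.range (n + 1), hp (s : ℚ) (a + 1) * hp x (n - a))
          + hp ((s + 1 : ℕ) : ℚ) 0 * hp x (n + 1 - 0) = hp (x + s) (n + 1) := by
        have h0 : hp ((s + 1 : ℕ) : ℚ) 0 = hp (s : ℚ) 0 := by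
          rw [hp_zero_right, hp_zero_right]
        have G := ih (n + 1) x
        rw [Finset.sum_range_succ' (fun a => hp (s : ℚ) a * hp x (n + 1 - a)) (n + 1)] at G
        simp only [Nat.succ_sub_succ_eq_sub] at G
        rw [h0]
        exact G
      have hfin : hp (x + (s + 1 : ℕ)) (n + 1) = hp (x + s) (n + 1) + hp (x + (s + 1 : ℕ)) n := by
        have := hp_pascal (x + s) n
        push_cast
        push_cast at this
        convert this using 2 <;> ring
      rw [hfin, ← houter]
      ring

/-- recurrence for `hp`. -/
lemma hp_rec (X : ℚ) (k : ℕ) :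
    (k : ℚ) * hp X k = X * ∑ j ∈ Finset.range k, hp X j := by
  induction k with
  | zero => simp
  | succ k ih =>
    rw [Finset.sum_range_succ, mul_add, ← ih]
    have := hp_succ_mul X k
    push_cast
    push_cast at this
    rw [this]
    ring

lemma sum_Icc_reindex (k : ℕ) (f : ℕ → ℚ) :
    ∑ a ∈ Finset.Icc 1 k, f (k - a) = ∑ j ∈ Finset.range k, f j := by
  refine Finset.sum_nbij' (i := fun a => k - a) (j := fun j => k - j) ?_ ?_ ?_ ?_ ?_
  · intro a ha; simp only [Finset.mem_Icc] at ha; simp only [Finset.mem_range]; omega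
  · intro j hj; simp only [Finset.mem_range] at hj; simp only [Finset.mem_Icc]; omega
  · intro a ha; simp only [Finset.mem_Icc] at ha; show k - (k - a) = a; omega
  · intro j hj; simp only [Finset.mem_range] at hj; show k - (k - j) = j; omega
  · intro a _; rfl

/-- the main evaluation of `Tp`. -/
lemma Tp_eq (X : ℚ) : ∀ k : ℕ, Tp X k = hp X k := by
  intro k
  induction k using Nat.strong_induction_on with
  | _ k ih =>
  rcases Nat.eq_zero_or_pos k with rfl | hk
  · rw [Tp_zero, hp_zero_right]
  have hkne : (k : ℚ) ≠ 0 := Nat.cast_ne_zero.mpr hk.ne'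
  have hmul : (k : ℚ) * Tp X k = (k : ℚ) * hp X k := by
    rw [Tp, Finset.mul_sum]
    have step1 : ∀ μ : k.Partition,
        (k : ℚ) * (X ^ (Multiset.card μ.parts) / (Zm μ.parts : ℚ))
        = ∑ a ∈ Finset.Icc 1 k, (a : ℚ) *
            ((μ.parts.count a : ℚ) * (X * (X ^ (Multiset.card μ.parts - 1) / (Zm μ.parts : ℚ)))) := by
      intro μ
      have hcard : 1 ≤ Multiset.card μ.parts := by
        by_contra h
        have : μ.parts = 0 := by
          rw [← Multiset.card_eq_zero]; omega
        have := μ.parts_sum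
        rw [‹μ.parts = 0›] at this
        simp at this
        omega
      have hXpow : X ^ (Multiset.card μ.parts) = X * X ^ (Multiset.card μ.parts - 1) := by
        conv_lhs => rw [show Multiset.card μ.parts = (Multiset.card μ.parts - 1) + 1 by omega]
        rw [pow_succ]
        ring
      rw [hXpow]
      rw [show ∀ q : ℚ, (k:ℚ) * q = (∑ a ∈ Finset.Icc 1 k, (a : ℚ) * (μ.parts.count a : ℚ)) * q
        from fun q => by rw [sum_count_eq]]
      rw [Finset.sum_mul]
      refine Finset.sum_congr rfl fun a _ => ?_
      ring
    rw [Finset.sum_congr rfl fun μ _ => step1 μ, Finset.sum_comm]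
    have step2 : ∀ a ∈ Finset.Icc 1 k,
        ∑ μ : k.Partition, (a : ℚ) *
            ((μ.parts.count a : ℚ) * (X * (X ^ (Multiset.card μ.parts - 1) / (Zm μ.parts : ℚ))))
        = X * hp X (k - a) := by
      intro a ha
      simp only [Finset.mem_Icc] at ha
      have hkey := key_bij X k a ha.1 ha.2
      have hane : (a : ℚ) ≠ 0 := Nat.cast_ne_zero.mpr (by omega)
      calc ∑ μ : k.Partition, (a : ℚ) *
            ((μ.parts.count a : ℚ) * (X * (X ^ (Multiset.card μ.parts - 1) / (Zm μ.parts : ℚ))))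
          = (a : ℚ) * X * ∑ μ : k.Partition,
            (μ.parts.count a : ℚ) * (X ^ (Multiset.card μ.parts - 1) / (Zm μ.parts : ℚ)) := by
            rw [Finset.mul_sum]; exact Finset.sum_congr rfl fun μ _ => by ring
        _ = (a : ℚ) * X * ((1 / (a : ℚ)) * Tp X (k - a)) := by rw [hkey]
        _ = X * Tp X (k - a) := by field_simp
        _ = X * hp X (k - a) := by rw [ih (k - a) (by omega)]
    rw [Finset.sum_congr rfl step2]
    rw [← Finset.mul_sum, sum_Icc_reindex k (hp X), ← hp_rec]
  exact mul_left_cancel₀ hkne hmul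

lemma asc_hp (s : ℕ) (hs : 1 ≤ s) (a : ℕ) (ha : 1 ≤ a) :
    (asc a s : ℚ) = (a : ℚ) * ((s - 1).factorial : ℚ) * hp (s : ℚ) a := by
  induction s, hs using Nat.le_induction with
  | base =>
    have hfac : (∏ t ∈ Finset.range a, ((1 : ℚ) + t)) = (a.factorial : ℚ) := by
      rw [show (∏ t ∈ Finset.range a, ((1 : ℚ) + t))
            = ∏ t ∈ Finset.range a, ((t + 1 : ℕ) : ℚ) from
          Finset.prod_congr rfl fun t _ => by push_cast; ring]
      rw [← Nat.cast_prod, Finset.prod_range_add_one_eq_factorial]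
    have hane : (a.factorial : ℚ) ≠ 0 := Nat.cast_ne_zero.mpr (Nat.factorial_pos _).ne'
    rw [asc, hp]
    push_cast [hfac]
    field_simp
    simp
  | succ s hs ih =>
    have hsne : (s : ℚ) ≠ 0 := Nat.cast_ne_zero.mpr (by omega)
    have hstep : (s : ℚ) * hp ((s : ℚ) + 1) a = ((s : ℚ) + a) * hp (s : ℚ) a := hp_shift _ _
    have hasc : (asc a (s + 1) : ℚ) = (asc a s : ℚ) * ((a : ℚ) + s) := by
      rw [asc, asc, Finset.prod_range_succ]
      push_cast
      ring
    rw [hasc, ih]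
    have hfac : ((s + 1 - 1).factorial : ℚ) = (s : ℚ) * ((s - 1).factorial : ℚ) := by
      rw [show s + 1 - 1 = (s - 1) + 1 by omega, Nat.factorial_succ]
      push_cast [Nat.cast_sub hs]
      ring
    have hcast : ((s + 1 : ℕ) : ℚ) = (s : ℚ) + 1 := by push_cast; ring
    rw [hfac, hcast]
    calc (a : ℚ) * ((s - 1).factorial : ℚ) * hp (s : ℚ) a * ((a : ℚ) + (s : ℚ))
        = (a : ℚ) * ((s - 1).factorial : ℚ) * (((s : ℚ) + (a : ℚ)) * hp (s : ℚ) a) := by ring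
      _ = (a : ℚ) * ((s - 1).factorial : ℚ) * ((s : ℚ) * hp ((s : ℚ) + 1) a) := by rw [← hstep]
      _ = (a : ℚ) * ((s : ℚ) * ((s - 1).factorial : ℚ)) * hp ((s : ℚ) + 1) a := by ring

lemma cb_eq_hp (y : ℚ) (n : ℕ) : cb (y + n - 1) n = hp y n := by
  rcases Nat.eq_zero_or_pos n with rfl | hn
  · simp [cb, hp]
  rw [cb, hp]
  congr 1
  rw [← Finset.prod_range_reflect (fun j => y + j) n]
  refine Finset.prod_congr rfl fun t ht => ?_
  simp only [Finset.mem_range] at ht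
  have : ((n - 1 - t : ℕ) : ℚ) = (n : ℚ) - 1 - t := by
    push_cast [Nat.cast_sub (by omega : t ≤ n - 1), Nat.cast_sub (by omega : 1 ≤ n)]
    ring
  rw [this]
  ring

theorem stmt12 (n s : ℕ) (hn : 1 ≤ n) (hs : 1 ≤ s) (X : ℚ) :
    ∑ μ : n.Partition, X ^ (μ.parts.card - 1) / zMu μ
        * (μ.parts.map fun a => (asc a s : ℚ)).sum
      = ((s - 1).factorial : ℚ) * (cb (X + n + s - 1) n - cb (X + n - 1) n) := by
  classical
  -- rewrite the inner multiset sum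
  have step1 : ∀ μ : n.Partition,
      X ^ (Multiset.card μ.parts - 1) / (zMu μ : ℚ) * (μ.parts.map fun a => (asc a s : ℚ)).sum
      = ∑ a ∈ Finset.Icc 1 n, (asc a s : ℚ) *
          ((μ.parts.count a : ℚ) * (X ^ (Multiset.card μ.parts - 1) / (Zm μ.parts : ℚ))) := by
    intro μ
    rw [zMu_eq, map_sum_eq μ (fun a => (asc a s : ℚ)), Finset.mul_sum]
    exact Finset.sum_congr rfl fun a _ => by ring
  rw [Finset.sum_congr rfl fun μ _ => step1 μ, Finset.sum_comm]
  have step2 : ∀ a ∈ Finset.Icc 1 n,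
      ∑ μ : n.Partition, (asc a s : ℚ) *
          ((μ.parts.count a : ℚ) * (X ^ (Multiset.card μ.parts - 1) / (Zm μ.parts : ℚ)))
      = ((s - 1).factorial : ℚ) * (hp (s : ℚ) a * hp X (n - a)) := by
    intro a ha
    simp only [Finset.mem_Icc] at ha
    have hane : (a : ℚ) ≠ 0 := Nat.cast_ne_zero.mpr (by omega)
    rw [← Finset.mul_sum, key_bij X n a ha.1 ha.2, Tp_eq, asc_hp s hs a ha.1]
    field_simp
  rw [Finset.sum_congr rfl step2, ← Finset.mul_sum]
  -- add and subtract the `a = 0` term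
  have hins : Finset.range (n + 1) = insert 0 (Finset.Icc 1 n) := by
    ext x
    simp only [Finset.mem_range, Finset.mem_insert, Finset.mem_Icc]
    omega
  have h0 : (0 : ℕ) ∉ Finset.Icc 1 n := by simp
  have hsum : ∑ a ∈ Finset.Icc 1 n, hp (s : ℚ) a * hp X (n - a)
      = hp (X + s) n - hp X n := by
    have hv := vdm s n X
    rw [hins, Finset.sum_insert h0] at hv
    have h00 : hp (s : ℚ) 0 * hp X (n - 0) = hp X n := by
      rw [hp_zero_right]; simp
    rw [h00] at hv
    linarith
  rw [hsum]
  have hc1 : cb (X + n + s - 1) n = hp (X + s) n := by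
    have := cb_eq_hp (X + s) n
    rw [show X + (n : ℚ) + s - 1 = X + s + n - 1 by ring]
    exact this
  have hc2 : cb (X + n - 1) n = hp X n := cb_eq_hp X n
  rw [hc1, hc2]
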